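/- Let H = (1/m) Σ_{i=1}^m (I − P̃_i) be a uniform stoquastic k-local Hamiltonian with degree bound d and m ≥ n, which is ε-frustrated for some ε ∈ (0,1]. Let S₀ ⊆ Σ^n be a nonempty set containing no bad strings for H. Then there exist an integer ℓ with ℓ ≥ εm/(2kd) ≥ εn/(2kd) and indices i_1, …, i_ℓ ∈ {1,…,m} whose qudit sets Q_{i_1}, …, Q_{i_ℓ} are pairwise disjoint, such that the sequence (P̃_{i_1}, …, P̃_{i_ℓ}) is sequentially (ε/2)-frustrated by |S₀⟩: setting u_0 = |S₀⟩ and u_t = P̃_{i_t} ⋯ P̃_{i_1} |S₀⟩, for every t ∈ {1,…,ℓ} the vector u_{t−1} is nonzero and ‖P̃_{i_t} · û_{t−1}‖² ≤ 1 − ε/2, where û denotes the subset state of supp(u). -/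

import Mathlib

open Matrix

/-- A uniform stoquastic `k`-local term on strings in `Σ^n`: a set `Q` of at most `k` qudits
together with a finite family of pairwise disjoint nonempty subsets of `Σ^Q`. -/
structure UTerm (A : Type) [Fintype A] [DecidableEq A] (n k : ℕ) where
  Q : Finset (Fin n)
  hQ : Q.card ≤ k
  J : ℕ
  T : Fin J → Finset ({ i : Fin n // i ∈ Q } → A)
  hT : ∀ j, (T j).Nonempty
  hdisj : ∀ j j', j ≠ j' → Disjoint (T j) (T j')

variable {A : Type} [Fintype A] [DecidableEq A] {n k : ℕ}

/-- The string equal to `t` on `Q` and to `z` on `Qᶜ`. -/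
def glue (Q : Finset (Fin n)) (t : { i : Fin n // i ∈ Q } → A)
    (z : { i : Fin n // i ∉ Q } → A) : Fin n → A :=
  fun i => if h : i ∈ Q then t ⟨i, h⟩ else z ⟨i, h⟩

/-- The subset state `|T_j , z⟩` of a local term. -/
noncomputable def UTerm.tvec (P : UTerm A n k) (j : Fin P.J)
    (z : { i : Fin n // i ∉ P.Q } → A) : (Fin n → A) → ℂ :=
  ((Real.sqrt (P.T j).card : ℂ))⁻¹ •
    (∑ t ∈ P.T j, Pi.single (glue P.Q t z) (1 : ℂ) : (Fin n → A) → ℂ)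

/-- The groundspace projector `P̃ = Σ_j Σ_z |T_j,z⟩⟨T_j,z|` of a uniform stoquastic local term. -/
noncomputable def UTerm.proj (P : UTerm A n k) : Matrix (Fin n → A) (Fin n → A) ℂ :=
  ∑ j : Fin P.J, ∑ z : { i : Fin n // i ∉ P.Q } → A,
    vecMulVec (P.tvec j z) (star (P.tvec j z))

/-- The uniform stoquastic local Hamiltonian `H = (1/m) Σᵢ (I - P̃ᵢ)`. -/
noncomputable def ham {m : ℕ} (terms : Fin m → UTerm A n k) :
    Matrix (Fin n → A) (Fin n → A) ℂ :=
  ((m : ℂ))⁻¹ • ∑ i, (1 - (terms i).proj)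

/-- A string is bad for `H` if its diagonal entry in some groundspace projector vanishes. -/
def Bad {m : ℕ} (terms : Fin m → UTerm A n k) (x : Fin n → A) : Prop :=
  ∃ i, (terms i).proj x x = 0

/-- `H` is `ε`-frustrated: every unit vector has energy at least `ε`. -/
def Frustrated {m : ℕ} (terms : Fin m → UTerm A n k) (ε : ℝ) : Prop :=
  ∀ ψ : (Fin n → A) → ℂ, ∑ x, ‖ψ x‖ ^ 2 = 1 →
    ε ≤ (star ψ ⬝ᵥ (ham terms).mulVec ψ).re

/-- Every qudit lies in at most `d` of the sets `Qᵢ`. -/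
def DegreeBound {m : ℕ} (terms : Fin m → UTerm A n k) (d : ℕ) : Prop :=
  ∀ q : Fin n, (Finset.univ.filter (fun i => q ∈ (terms i).Q)).card ≤ d

/-- The subset state of a finite set `S`. -/
noncomputable def subsetState {X : Type} [DecidableEq X] (S : Finset X) : X → ℂ :=
  fun x => if x ∈ S then ((Real.sqrt S.card : ℂ))⁻¹ else 0

/-! Greedy construction. The entries of each `P̃` are non-negative and `P̃ x x ≠ 0` depends
only on the restriction of `x` to `Q`, so every string in the support of `u_t` agrees with a good
string of `S₀` off the qudits used so far; a term acting on fresh qudits therefore keeps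
`u_{t+1} ≠ 0`. Since `P̃` is an orthogonal projector, `‖P̃ û_t‖² = ⟨û_t|P̃|û_t⟩`, and frustration
of `H` at `û_t` together with an averaging argument gives at least `εm/2` terms with
`‖P̃_i û_t‖² ≤ 1 - ε/2`, while by the degree bound at most `t k d` terms meet the qudits already
used. Hence a fresh term can be chosen as long as `2 t k d < ε m`. -/

open Finset
open scoped ComplexOrder

set_option linter.unusedSectionVars false

section SubsetState

variable {X : Type} [DecidableEq X]

lemma subsetState_nonneg (S : Finset X) : 0 ≤ subsetState S := fun x => by
  unfold subsetState
  split_ifs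
  · rw [← Complex.ofReal_inv]
    exact Complex.zero_le_real.mpr (by positivity)
  · rfl

lemma subsetState_ne_zero_iff {S : Finset X} {x : X} : subsetState S x ≠ 0 ↔ x ∈ S := by
  unfold subsetState
  split_ifs with hx
  · have : (0 : ℝ) < #S := by exact_mod_cast card_pos.mpr ⟨x, hx⟩
    simp [this.ne', hx]
  · simp [hx]

variable [Fintype X]

lemma star_subsetState_dotProduct (S S' : Finset X) :
    star (subsetState S) ⬝ᵥ subsetState S' =
      #(S ∩ S') * (((Real.sqrt #S)⁻¹ * (Real.sqrt #S')⁻¹ : ℝ) : ℂ) := by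
  have hterm : ∀ x, star (subsetState S x) * subsetState S' x =
      if x ∈ S ∩ S' then (((Real.sqrt #S)⁻¹ * (Real.sqrt #S')⁻¹ : ℝ) : ℂ) else 0 := by
    intro x
    by_cases hx : x ∈ S <;> by_cases hx' : x ∈ S' <;> simp [subsetState, hx, hx']
  simp only [dotProduct, Pi.star_apply, hterm, sum_ite_mem, univ_inter, sum_const, nsmul_eq_mul]

lemma star_subsetState_dotProduct_self {S : Finset X} (hS : S.Nonempty) :
    star (subsetState S) ⬝ᵥ subsetState S = 1 := by
  have hcard : (0 : ℝ) < #S := by exact_mod_cast hS.card_pos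
  rw [star_subsetState_dotProduct, inter_self, ← mul_inv, Real.mul_self_sqrt hcard.le]
  push_cast
  exact mul_inv_cancel₀ (by exact_mod_cast hcard.ne')

lemma star_subsetState_dotProduct_of_disjoint {S S' : Finset X} (h : Disjoint S S') :
    star (subsetState S) ⬝ᵥ subsetState S' = 0 := by
  rw [star_subsetState_dotProduct, disjoint_iff_inter_eq_empty.mp h]
  simp

end SubsetState

section Projector

variable {X ι : Type} [Fintype X] [Fintype ι] [DecidableEq ι]

lemma sum_norm_sq_eq_re_star_dotProduct (v : X → ℂ) :
    ∑ x, ‖v x‖ ^ 2 = (star v ⬝ᵥ v).re := by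
  simp only [dotProduct, Pi.star_apply, Complex.star_def, Complex.conj_mul', Complex.re_sum]
  norm_cast

lemma sum_norm_sq_mulVec_of_conjTranspose_mul_self {M : Matrix X X ℂ} (hM : Mᴴ * M = M)
    (ψ : X → ℂ) : ∑ x, ‖(M *ᵥ ψ) x‖ ^ 2 = (star ψ ⬝ᵥ M *ᵥ ψ).re := by
  rw [sum_norm_sq_eq_re_star_dotProduct, star_mulVec, ← dotProduct_mulVec, mulVec_mulVec, hM]

lemma conjTranspose_mul_self_of_orthonormal {w : ι → X → ℂ}
    (hw : ∀ a b, star (w a) ⬝ᵥ w b = if a = b then 1 else 0) :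
    (∑ a, vecMulVec (w a) (star (w a)))ᴴ * ∑ a, vecMulVec (w a) (star (w a)) =
      ∑ a, vecMulVec (w a) (star (w a)) := by
  simp only [conjTranspose_sum, conjTranspose_vecMulVec, star_star, sum_mul, mul_sum,
    vecMulVec_mul_vecMulVec, hw, ite_smul, one_smul, zero_smul]
  rw [sum_comm]
  simp_rw [apply_ite (vecMulVec _), vecMulVec_zero, sum_ite_eq, mem_univ, if_true]

end Projector

section NonnegMatrix

variable {X : Type} [Fintype X] {M : Matrix X X ℂ} {v : X → ℂ}

lemma exists_ne_zero_of_mulVec_apply_ne_zero {x : X} (h : (M *ᵥ v) x ≠ 0) :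
    ∃ y, M x y ≠ 0 ∧ v y ≠ 0 := by
  obtain ⟨y, -, hy⟩ := exists_ne_zero_of_sum_ne_zero h
  exact ⟨y, left_ne_zero_of_mul hy, right_ne_zero_of_mul hy⟩

lemma mulVec_nonneg_of_nonneg (hM : ∀ x y, 0 ≤ M x y) (hv : 0 ≤ v) : 0 ≤ M *ᵥ v :=
  fun x => sum_nonneg fun y _ => mul_nonneg (hM x y) (hv y)

lemma mulVec_apply_ne_zero_of_nonneg (hM : ∀ x y, 0 ≤ M x y) (hv : 0 ≤ v) {x : X}
    (hMx : M x x ≠ 0) (hvx : v x ≠ 0) : (M *ᵥ v) x ≠ 0 := by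
  intro h
  rw [mulVec, dotProduct, sum_eq_zero_iff_of_nonneg fun y _ => mul_nonneg (hM x y) (hv y)] at h
  exact mul_ne_zero hMx hvx (h x (mem_univ x))

end NonnegMatrix

def restrictCompl (Q : Finset (Fin n)) (x : Fin n → A) : { i : Fin n // i ∉ Q } → A :=
  fun i => x i

lemma glue_eq_iff {Q : Finset (Fin n)} {t : { i : Fin n // i ∈ Q } → A}
    {z : { i : Fin n // i ∉ Q } → A} {x : Fin n → A} :
    glue Q t z = x ↔ Q.restrict x = t ∧ restrictCompl Q x = z := by
  constructor
  · rintro rfl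
    constructor <;> funext ⟨i, hi⟩ <;> simp [glue, Finset.restrict, restrictCompl, hi]
  · rintro ⟨rfl, rfl⟩
    funext i
    by_cases hi : i ∈ Q <;> simp [glue, Finset.restrict, restrictCompl, hi]

lemma glue_left_injective (Q : Finset (Fin n)) (z : { i : Fin n // i ∉ Q } → A) :
    Function.Injective (glue Q · z) := fun _ _ h =>
  (glue_eq_iff.mp h).1.symm.trans (glue_eq_iff.mp rfl).1

namespace UTerm

variable (P : UTerm A n k)

def block (j : Fin P.J) (z : { i : Fin n // i ∉ P.Q } → A) : Finset (Fin n → A) :=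
  (P.T j).image (glue P.Q · z)

lemma mem_block {j : Fin P.J} {z : { i : Fin n // i ∉ P.Q } → A} {x : Fin n → A} :
    x ∈ P.block j z ↔ P.Q.restrict x ∈ P.T j ∧ restrictCompl P.Q x = z := by
  simp only [block, mem_image, glue_eq_iff]
  constructor
  · rintro ⟨t, ht, rfl, rfl⟩
    exact ⟨ht, rfl⟩
  · rintro ⟨ht, rfl⟩
    exact ⟨_, ht, rfl, rfl⟩

lemma tvec_eq_subsetState (j : Fin P.J) (z : { i : Fin n // i ∉ P.Q } → A) :
    P.tvec j z = subsetState (P.block j z) := by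
  have hcard : #(P.block j z) = #(P.T j) := card_image_of_injective _ (glue_left_injective _ z)
  funext x
  simp only [tvec, subsetState, hcard, Pi.smul_apply, Finset.sum_apply, Pi.single_apply,
    smul_eq_mul, eq_comm (a := x), glue_eq_iff, ite_and, sum_ite_eq, mem_block]
  split_ifs <;> simp_all

lemma disjoint_block {j j' : Fin P.J} {z z' : { i : Fin n // i ∉ P.Q } → A}
    (h : (j, z) ≠ (j', z')) : Disjoint (P.block j z) (P.block j' z') := by
  refine disjoint_left.mpr fun x hx hx' => ?_
  obtain ⟨hj, rfl⟩ := P.mem_block.mp hx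
  obtain ⟨hj', rfl⟩ := P.mem_block.mp hx'
  have : j = j' := by_contra fun hne => disjoint_left.mp (P.hdisj j j' hne) hj hj'
  exact h (by rw [this])

lemma star_tvec_dotProduct_tvec (a b : Fin P.J × ({ i : Fin n // i ∉ P.Q } → A)) :
    star (P.tvec a.1 a.2) ⬝ᵥ P.tvec b.1 b.2 = if a = b then 1 else 0 := by
  simp only [tvec_eq_subsetState]
  split_ifs with h
  · subst h
    exact star_subsetState_dotProduct_self ((P.hT a.1).image _)
  · exact star_subsetState_dotProduct_of_disjoint (P.disjoint_block h)

lemma conjTranspose_proj_mul_proj : P.projᴴ * P.proj = P.proj := by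
  have hsum : P.proj = ∑ a : Fin P.J × ({ i : Fin n // i ∉ P.Q } → A),
      vecMulVec (P.tvec a.1 a.2) (star (P.tvec a.1 a.2)) := by
    rw [proj, Fintype.sum_prod_type]
  rw [hsum]
  exact conjTranspose_mul_self_of_orthonormal P.star_tvec_dotProduct_tvec

lemma sum_norm_sq_proj_mulVec (ψ : (Fin n → A) → ℂ) :
    ∑ x, ‖(P.proj *ᵥ ψ) x‖ ^ 2 = (star ψ ⬝ᵥ P.proj *ᵥ ψ).re :=
  sum_norm_sq_mulVec_of_conjTranspose_mul_self P.conjTranspose_proj_mul_proj ψ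

lemma tvec_nonneg (j : Fin P.J) (z : { i : Fin n // i ∉ P.Q } → A) : 0 ≤ P.tvec j z := by
  rw [tvec_eq_subsetState]
  exact subsetState_nonneg _

lemma tvec_ne_zero_iff {j : Fin P.J} {z : { i : Fin n // i ∉ P.Q } → A} {x : Fin n → A} :
    P.tvec j z x ≠ 0 ↔ P.Q.restrict x ∈ P.T j ∧ restrictCompl P.Q x = z := by
  rw [tvec_eq_subsetState, subsetState_ne_zero_iff, mem_block]

lemma proj_apply (x y : Fin n → A) :
    P.proj x y = ∑ j, ∑ z, P.tvec j z x * star (P.tvec j z y) := by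
  simp only [proj, Matrix.sum_apply, vecMulVec_apply, Pi.star_apply]

lemma proj_apply_nonneg (x y : Fin n → A) : 0 ≤ P.proj x y := by
  rw [proj_apply]
  exact sum_nonneg fun j _ => sum_nonneg fun z _ =>
    mul_nonneg (P.tvec_nonneg j z x) (star_nonneg_iff.mpr (P.tvec_nonneg j z y))

lemma proj_apply_ne_zero_iff {x y : Fin n → A} :
    P.proj x y ≠ 0 ↔ restrictCompl P.Q x = restrictCompl P.Q y ∧
      ∃ j, P.Q.restrict x ∈ P.T j ∧ P.Q.restrict y ∈ P.T j := by
  have hterm := fun j z => mul_nonneg (P.tvec_nonneg j z x)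
    (star_nonneg_iff.mpr (P.tvec_nonneg j z y))
  rw [proj_apply, ne_eq, sum_eq_zero_iff_of_nonneg fun j _ => sum_nonneg fun z _ => hterm j z]
  simp only [sum_eq_zero_iff_of_nonneg fun z _ => hterm _ z, mem_univ, true_implies, not_forall,
    ← ne_eq, mul_ne_zero_iff, star_ne_zero, tvec_ne_zero_iff]
  constructor
  · rintro ⟨j, z, ⟨hx, rfl⟩, hy, hz⟩
    exact ⟨hz.symm, j, hx, hy⟩
  · rintro ⟨hxy, j, hx, hy⟩
    exact ⟨j, _, ⟨hx, rfl⟩, hy, hxy.symm⟩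

lemma proj_apply_self_ne_zero_iff {x : Fin n → A} :
    P.proj x x ≠ 0 ↔ ∃ j, P.Q.restrict x ∈ P.T j := by
  simp [proj_apply_ne_zero_iff]

end UTerm

lemma mul_lt_of_lt_ceil_div {x c : ℝ} {t : ℕ} (hc : 0 ≤ c) (ht : t < ⌈x / c⌉₊) : t * c < x := by
  rcases hc.eq_or_lt with rfl | hc
  · simp at ht
  · exact (lt_div_iff₀ hc).mp (Nat.lt_ceil.mp ht)

lemma le_card_filter_le_sub_half {ι : Type*} [Fintype ι] {ε : ℝ} (hε : 0 ≤ ε) (e : ι → ℝ)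
    (he : ∀ i, 0 ≤ e i) (h : ε * Fintype.card ι ≤ ∑ i, (1 - e i)) :
    ε * Fintype.card ι / 2 ≤ #{i | e i ≤ 1 - ε / 2} := by
  have hcompl : (#{i | ¬ e i ≤ 1 - ε / 2} : ℝ) ≤ Fintype.card ι := by
    exact_mod_cast card_le_univ _
  have hsplit :
      ∑ i, (1 - e i) ≤ #{i | e i ≤ 1 - ε / 2} + #{i | ¬ e i ≤ 1 - ε / 2} * (ε / 2) :=
    calc ∑ i, (1 - e i) ≤ ∑ i, if e i ≤ 1 - ε / 2 then 1 else ε / 2 :=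
          sum_le_sum fun i _ => by split_ifs with hi <;> linarith [he i]
      _ = _ := by simp [sum_ite]
  nlinarith

lemma re_star_dotProduct_ham_mulVec {m : ℕ} {terms : Fin m → UTerm A n k}
    {ψ : (Fin n → A) → ℂ} (hψ : star ψ ⬝ᵥ ψ = 1) :
    (star ψ ⬝ᵥ ham terms *ᵥ ψ).re =
      (m : ℝ)⁻¹ * ∑ i, (1 - ∑ x, ‖((terms i).proj *ᵥ ψ) x‖ ^ 2) := by
  simp only [ham, smul_mulVec, sum_mulVec, dotProduct_smul, dotProduct_sum, sub_mulVec,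
    one_mulVec, dotProduct_sub, hψ, UTerm.sum_norm_sq_proj_mulVec]
  rw [← Complex.ofReal_natCast, ← Complex.ofReal_inv, smul_eq_mul, Complex.re_ofReal_mul,
    Complex.re_sum]
  simp_rw [Complex.sub_re, Complex.one_re]

section DegreeCounting

variable {m d : ℕ} {terms : Fin m → UTerm A n k}

lemma card_filter_not_disjoint_le (hdeg : DegreeBound terms d) (Q : Finset (Fin n)) :
    #{i | ¬ Disjoint (terms i).Q Q} ≤ #Q * d :=
  calc #{i | ¬ Disjoint (terms i).Q Q} ≤ #(Q.biUnion fun q => {i | q ∈ (terms i).Q}) :=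
        card_le_card fun i hi => by
          obtain ⟨q, hqi, hq⟩ := not_disjoint_iff.mp (mem_filter.mp hi).2
          exact mem_biUnion.mpr ⟨q, hq, mem_filter.mpr ⟨mem_univ _, hqi⟩⟩
    _ ≤ #Q * d := card_biUnion_le_card_mul _ _ _ fun q _ => hdeg q

lemma card_filter_exists_not_disjoint_le (hdeg : DegreeBound terms d) (f : ℕ → Fin m)
    (t : ℕ) : #{i | ∃ r < t, ¬ Disjoint (terms i).Q (terms (f r)).Q} ≤ t * (k * d) :=
  calc #{i | ∃ r < t, ¬ Disjoint (terms i).Q (terms (f r)).Q}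
      ≤ #((range t).biUnion fun r => {i | ¬ Disjoint (terms i).Q (terms (f r)).Q}) :=
        card_le_card fun i hi => by
          obtain ⟨r, hr, hri⟩ := (mem_filter.mp hi).2
          exact mem_biUnion.mpr ⟨r, mem_range.mpr hr, mem_filter.mpr ⟨mem_univ _, hri⟩⟩
    _ ≤ #(range t) * (k * d) := card_biUnion_le_card_mul _ _ _ fun r _ =>
        (card_filter_not_disjoint_le hdeg _).trans (Nat.mul_le_mul_right d (terms (f r)).hQ)
    _ = t * (k * d) := by rw [card_range]

end DegreeCounting

section Orbit

variable {m : ℕ} (terms : Fin m → UTerm A n k) (S₀ : Finset (Fin n → A))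

noncomputable def orbit (f : ℕ → Fin m) : ℕ → (Fin n → A) → ℂ
  | 0 => subsetState S₀
  | t + 1 => (terms (f t)).proj *ᵥ orbit f t

open Classical in
def SeqFrustratedAt (ε : ℝ) (f : ℕ → Fin m) (s : ℕ) : Prop :=
  (∀ r < s, Disjoint (terms (f s)).Q (terms (f r)).Q) ∧
    ∑ x, ‖((terms (f s)).proj *ᵥ
      subsetState (Function.support (orbit terms S₀ f s)).toFinset) x‖ ^ 2 ≤ 1 - ε / 2

variable {terms S₀}

lemma orbit_congr {f g : ℕ → Fin m} {t : ℕ} (h : ∀ s < t, f s = g s) :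
    orbit terms S₀ f t = orbit terms S₀ g t := by
  induction t with
  | zero => rfl
  | succ t ih =>
    rw [orbit, orbit, ih fun s hs => h s (hs.trans t.lt_succ_self), h t t.lt_succ_self]

lemma orbit_nonneg (f : ℕ → Fin m) (t : ℕ) : 0 ≤ orbit terms S₀ f t := by
  induction t with
  | zero => exact subsetState_nonneg S₀
  | succ t ih => exact mulVec_nonneg_of_nonneg (terms (f t)).proj_apply_nonneg ih

lemma exists_eq_of_orbit_apply_ne_zero {f : ℕ → Fin m} {t : ℕ} {x : Fin n → A}
    (hx : orbit terms S₀ f t x ≠ 0) :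
    ∃ x₀ ∈ S₀, ∀ q, (∀ s < t, q ∉ (terms (f s)).Q) → x q = x₀ q := by
  induction t generalizing x with
  | zero => exact ⟨x, subsetState_ne_zero_iff.mp hx, fun _ _ => rfl⟩
  | succ t ih =>
    obtain ⟨y, hxy, hy⟩ := exists_ne_zero_of_mulVec_apply_ne_zero hx
    obtain ⟨x₀, hx₀, hyx₀⟩ := ih hy
    refine ⟨x₀, hx₀, fun q hq => ?_⟩
    rw [← hyx₀ q fun s hs => hq s (hs.trans t.lt_succ_self)]
    exact congrFun ((terms (f t)).proj_apply_ne_zero_iff.mp hxy).1 ⟨q, hq t t.lt_succ_self⟩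

lemma orbit_ne_zero (hS₀ : S₀.Nonempty) (hgood : ∀ x ∈ S₀, ¬ Bad terms x) {f : ℕ → Fin m}
    {t : ℕ} (hdisj : ∀ s < t, ∀ r < s, Disjoint (terms (f s)).Q (terms (f r)).Q) :
    orbit terms S₀ f t ≠ 0 := by
  induction t with
  | zero =>
    obtain ⟨x, hx⟩ := hS₀
    exact fun h => subsetState_ne_zero_iff.mpr hx (congrFun h x)
  | succ t ih =>
    obtain ⟨x, hx⟩ := Function.ne_iff.mp (ih fun s hs => hdisj s (hs.trans t.lt_succ_self))
    obtain ⟨x₀, hx₀, hagree⟩ := exists_eq_of_orbit_apply_ne_zero hx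
    have hres : (terms (f t)).Q.restrict x = (terms (f t)).Q.restrict x₀ :=
      funext fun ⟨q, hq⟩ => hagree q fun s hs hqs =>
        disjoint_left.mp (hdisj t t.lt_succ_self s hs) hq hqs
    have hdiag : (terms (f t)).proj x x ≠ 0 := by
      rw [UTerm.proj_apply_self_ne_zero_iff, hres, ← UTerm.proj_apply_self_ne_zero_iff]
      exact fun h => hgood x₀ hx₀ ⟨f t, h⟩
    exact fun h => mulVec_apply_ne_zero_of_nonneg (terms (f t)).proj_apply_nonneg
      (orbit_nonneg f t) hdiag hx (congrFun h x)

lemma seqFrustratedAt_congr {ε : ℝ} {f g : ℕ → Fin m} {s : ℕ} (h : ∀ r ≤ s, f r = g r) :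
    SeqFrustratedAt terms S₀ ε f s ↔ SeqFrustratedAt terms S₀ ε g s := by
  rw [SeqFrustratedAt, SeqFrustratedAt, h s le_rfl, orbit_congr fun r hr => h r hr.le]
  exact and_congr_left' (forall₂_congr fun r hr => by rw [h r hr.le])

end Orbit

section Greedy

variable {m d : ℕ} {terms : Fin m → UTerm A n k} {S₀ : Finset (Fin n → A)} {ε : ℝ}
  (hdeg : DegreeBound terms d) (hfrust : Frustrated terms ε) (hε : 0 ≤ ε)
  (hS₀ : S₀.Nonempty) (hgood : ∀ x ∈ S₀, ¬ Bad terms x)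

include hdeg hfrust hε hS₀ hgood

lemma exists_seqFrustratedAt_update {f : ℕ → Fin m} {t : ℕ}
    (hf : ∀ s < t, SeqFrustratedAt terms S₀ ε f s) (ht : t * (2 * k * d) < ε * m) :
    ∃ i, SeqFrustratedAt terms S₀ ε (Function.update f t i) t := by
  classical
  have hm : (0 : ℝ) < m := pos_of_mul_pos_right ((by positivity : (0 : ℝ) ≤ _).trans_lt ht) hε
  set ψ := subsetState (Function.support (orbit terms S₀ f t)).toFinset
  have hψ : star ψ ⬝ᵥ ψ = 1 := star_subsetState_dotProduct_self <| Set.toFinset_nonempty.mpr <|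
    Function.support_nonempty_iff.mpr (orbit_ne_zero hS₀ hgood fun s hs => (hf s hs).1)
  have henergy := hfrust ψ (by rw [sum_norm_sq_eq_re_star_dotProduct, hψ, Complex.one_re])
  rw [re_star_dotProduct_ham_mulVec hψ, le_inv_mul_iff₀ hm, mul_comm] at henergy
  set e : Fin m → ℝ := fun i => ∑ x, ‖((terms i).proj *ᵥ ψ) x‖ ^ 2
  have hlow : ε * m / 2 ≤ #{i | e i ≤ 1 - ε / 2} := by
    simpa using le_card_filter_le_sub_half hε e (fun i => by positivity) (by simpa using henergy)
  have hfree : #{i | ∃ r < t, ¬ Disjoint (terms i).Q (terms (f r)).Q} <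
      #{i | e i ≤ 1 - ε / 2} := by
    have hblocked : (#{i | ∃ r < t, ¬ Disjoint (terms i).Q (terms (f r)).Q} : ℝ) ≤ t * (k * d) :=
      by exact_mod_cast card_filter_exists_not_disjoint_le hdeg f t
    exact Nat.cast_lt (α := ℝ).mp (hblocked.trans_lt (by linarith))
  obtain ⟨i, hi_low, hi_free⟩ := exists_mem_notMem_of_card_lt_card hfree
  refine ⟨i, ?_, ?_⟩
  · simp only [mem_filter, mem_univ, true_and, not_exists, not_and, not_not] at hi_free
    intro r hr
    rw [Function.update_self, Function.update_of_ne hr.ne]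
    exact hi_free r hr
  · rw [Function.update_self, orbit_congr fun s hs => Function.update_of_ne hs.ne _ _]
    exact (mem_filter.mp hi_low).2

lemma exists_seqFrustrated (hm : 1 ≤ m) (ℓ : ℕ) (hℓ : ∀ t < ℓ, t * (2 * k * d) < ε * m) :
    ∃ f : ℕ → Fin m, ∀ s < ℓ, SeqFrustratedAt terms S₀ ε f s := by
  induction ℓ with
  | zero => exact ⟨fun _ => ⟨0, hm⟩, fun _ h => absurd h (Nat.not_lt_zero _)⟩
  | succ ℓ ih =>
    obtain ⟨f, hf⟩ := ih fun t ht => hℓ t (ht.trans ℓ.lt_succ_self)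
    obtain ⟨i, hi⟩ := exists_seqFrustratedAt_update hdeg hfrust hε hS₀ hgood hf
      (hℓ ℓ ℓ.lt_succ_self)
    refine ⟨Function.update f ℓ i, fun s hs => ?_⟩
    rcases Nat.lt_succ_iff_lt_or_eq.mp hs with hs | rfl
    · exact (seqFrustratedAt_congr fun r hr =>
        (Function.update_of_ne (hr.trans_lt hs).ne _ _).symm).mp (hf s hs)
    · exact hi

end Greedy

theorem stmt8_general {A : Type} [Fintype A] [DecidableEq A]
    {n k d m : ℕ} (hm : 1 ≤ m) (hmn : n ≤ m)
    (terms : Fin m → UTerm A n k)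
    (hdeg : DegreeBound terms d)
    (ε : ℝ) (hε0 : 0 < ε)
    (hfrust : Frustrated terms ε)
    (S₀ : Finset (Fin n → A)) (hS₀ne : S₀.Nonempty)
    (hgood : ∀ x ∈ S₀, ¬ Bad terms x) :
    ∃ (ℓ : ℕ) (idx : Fin ℓ → Fin m) (u : Fin (ℓ + 1) → (Fin n → A) → ℂ),
      ε * m / (2 * k * d) ≤ (ℓ : ℝ) ∧
      ε * n / (2 * k * d) ≤ (ℓ : ℝ) ∧
      (∀ t t' : Fin ℓ, t ≠ t' → Disjoint (terms (idx t)).Q (terms (idx t')).Q) ∧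
      u 0 = subsetState S₀ ∧
      (∀ t : Fin ℓ, u t.succ = (terms (idx t)).proj.mulVec (u t.castSucc)) ∧
      (∀ t : Fin ℓ, u t.castSucc ≠ 0 ∧
        ∀ St : Finset (Fin n → A), ↑St = {x | u t.castSucc x ≠ 0} →
          ∑ x, ‖(terms (idx t)).proj.mulVec (subsetState St) x‖ ^ 2 ≤ 1 - ε / 2) := by
  classical
  set ℓ := ⌈ε * m / (2 * k * d)⌉₊
  obtain ⟨f, hf⟩ := exists_seqFrustrated hdeg hfrust hε0.le hS₀ne hgood hm ℓ
    fun t ht => mul_lt_of_lt_ceil_div (by positivity) ht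
  have hdisj : ∀ s < ℓ, ∀ r < s, Disjoint (terms (f s)).Q (terms (f r)).Q :=
    fun s hs => (hf s hs).1
  refine ⟨ℓ, fun t => f t, fun t => orbit terms S₀ f t, Nat.le_ceil _,
    (by gcongr : ε * n / (2 * k * d) ≤ _).trans (Nat.le_ceil _), fun t t' hne => ?_, rfl,
    fun t => rfl, fun t => ⟨orbit_ne_zero hS₀ne hgood fun s hs => hdisj s (hs.trans t.2), ?_⟩⟩
  · rcases lt_or_gt_of_ne (Fin.val_ne_of_ne hne) with h | h
    · exact (hdisj t' t'.2 t h).symm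
    · exact hdisj t t.2 t' h
  · intro St hSt
    obtain rfl : St = (Function.support (orbit terms S₀ f t)).toFinset :=
      coe_injective (by rw [hSt, Set.coe_toFinset]; rfl)
    exact (hf t t.2).2

/-- If an `ε`-frustrated uniform stoquastic `k`-local Hamiltonian with degree bound `d` and
`m ≥ n` is given, and `S₀` is a nonempty set of good strings, then there is a sequence of at
least `εm/(2kd) ≥ εn/(2kd)` terms with pairwise disjoint qudit sets which is sequentially
`ε/2`-frustrated by the subset state `|S₀⟩`. -/
theorem stmt8 {A : Type} [Fintype A] [DecidableEq A] (hA : 2 ≤ Fintype.card A)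
    {n k d m : ℕ} (hn : 1 ≤ n) (hk : 1 ≤ k) (hd : 1 ≤ d) (hm : 1 ≤ m) (hmn : n ≤ m)
    (terms : Fin m → UTerm A n k)
    (hdeg : DegreeBound terms d)
    (ε : ℝ) (hε0 : 0 < ε) (hε1 : ε ≤ 1)
    (hfrust : Frustrated terms ε)
    (S₀ : Finset (Fin n → A)) (hS₀ne : S₀.Nonempty)
    (hgood : ∀ x ∈ S₀, ¬ Bad terms x) :
    ∃ (ℓ : ℕ) (idx : Fin ℓ → Fin m) (u : Fin (ℓ + 1) → (Fin n → A) → ℂ),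
      ε * m / (2 * k * d) ≤ (ℓ : ℝ) ∧
      ε * n / (2 * k * d) ≤ (ℓ : ℝ) ∧
      (∀ t t' : Fin ℓ, t ≠ t' → Disjoint (terms (idx t)).Q (terms (idx t')).Q) ∧
      u 0 = subsetState S₀ ∧
      (∀ t : Fin ℓ, u t.succ = (terms (idx t)).proj.mulVec (u t.castSucc)) ∧
      (∀ t : Fin ℓ, u t.castSucc ≠ 0 ∧
        ∀ St : Finset (Fin n → A), ↑St = {x | u t.castSucc x ≠ 0} →
          ∑ x, ‖(terms (idx t)).proj.mulVec (subsetState St) x‖ ^ 2 ≤ 1 - ε / 2) :=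
  stmt8_general hm hmn terms hdeg ε hε0 hfrust S₀ hS₀ne hgood
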